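/- Let α ∈ S_m be a permutation and let f : C(m) → C(n) be a binary forest. Then there exist a binary forest f' : C(m) → C(n) and a permutation α' ∈ S_n such that f ∘ p_α = p_{α'} ∘ f' as homeomorphisms from C(m) to C(n). -/

import Mathlib

/-! Basic setup: the Cantor set `Δ = ℕ → Bool` and `C n = Fin n × Δ`,
the disjoint union of `n` copies of the Cantor set. -/

abbrev Δ : Type := ℕ → Bool
abbrev C (n : ℕ) : Type := Fin n × Δ

/-- A bijection between discrete spaces, as a homeomorphism. -/
def discHomeo {X Y : Type*} [TopologicalSpace X] [TopologicalSpace Y]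
    [DiscreteTopology X] [DiscreteTopology Y] (e : X ≃ Y) : X ≃ₜ Y :=
  ⟨e, continuous_of_discreteTopology, continuous_of_discreteTopology⟩

/-- The permutation homeomorphism `p_α : C n ≃ₜ C n`, permuting the copies
of the Cantor set according to `α`. -/
def permC {n : ℕ} (α : Equiv.Perm (Fin n)) : C n ≃ₜ C n :=
  (discHomeo α).prodCongr (Homeomorph.refl Δ)

/-- Cast between `C m` and `C n` when `m = n`. -/
def castC {m n : ℕ} (h : m = n) : C m ≃ₜ C n :=
  (discHomeo (finCongr h)).prodCongr (Homeomorph.refl Δ)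

/-- `C (m + n)` is the disjoint union of `C m` and `C n` (first `m` copies,
then the remaining `n` copies). -/
def toSum (m n : ℕ) : C (m + n) ≃ₜ (C m) ⊕ (C n) :=
  ((discHomeo finSumFinEquiv.symm).prodCongr (Homeomorph.refl Δ)).trans
    (Homeomorph.sumProdDistrib)

/-- The direct sum `f ⊕ g` of homeomorphisms, acting as `f` on the first `m`
copies (sent to the first `m'` copies) and as `g` on the last `n` copies. -/
def dsum {m m' n n' : ℕ} (f : C m ≃ₜ C m') (g : C n ≃ₜ C n') :
    C (m + n) ≃ₜ C (m' + n') :=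
  ((toSum m n).trans (f.sumCongr g)).trans (toSum m' n').symm

/-- The split homeomorphism `x : C 1 ≃ₜ C 2`: a sequence starting with letter
`i` is sent to the `(i+1)`-st copy of the Cantor set, deleting the first letter. -/
def split : C 1 ≃ₜ C 2 where
  toFun p := (finTwoEquiv.symm (p.2 0), fun k => p.2 (k + 1))
  invFun p := (0, fun k => Nat.casesOn k (finTwoEquiv p.1) (fun j => p.2 j))
  left_inv := by
    rintro ⟨i, w⟩
    refine Prod.ext (Subsingleton.elim _ _) ?_
    funext k
    cases k <;> simp
  right_inv := by
    rintro ⟨i, w⟩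
    refine Prod.ext ?_ rfl
    simp
  continuous_toFun := by
    refine Continuous.prodMk ?_ ?_
    · exact Continuous.comp continuous_of_discreteTopology
        ((continuous_apply 0).comp continuous_snd)
    · exact continuous_pi fun k => (continuous_apply (k + 1)).comp continuous_snd
  continuous_invFun := by
    refine Continuous.prodMk continuous_const ?_
    refine continuous_pi fun k => ?_
    cases k with
    | zero => exact Continuous.comp continuous_of_discreteTopology continuous_fst
    | succ j => exact (continuous_apply j).comp continuous_snd

/-- The split homeomorphism `x_i^{(n)} = id_{i-1} ⊕ x ⊕ id_{n-i} : C n ≃ₜ C (n+1)`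
(with `i` zero-indexed, so `i : Fin n` splits the `(i+1)`-st copy). -/
def splitAt {n : ℕ} (i : Fin n) : C n ≃ₜ C (n + 1) :=
  ((castC (show n = (i : ℕ) + 1 + (n - 1 - i) by have := i.isLt; omega)).trans
    (dsum (dsum (Homeomorph.refl (C i)) split) (Homeomorph.refl (C (n - 1 - i))))).trans
    (castC (show (i : ℕ) + 2 + (n - 1 - i) = n + 1 by have := i.isLt; omega))

/-- `IsForest f` says that `f : C m ≃ₜ C n` is a binary forest, i.e. a
(possibly empty) composition of split homeomorphisms.  A binary tree is a
binary forest with domain `C 1`. -/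
inductive IsForest : ∀ {m n : ℕ}, (C m ≃ₜ C n) → Prop where
  | refl (m : ℕ) : IsForest (Homeomorph.refl (C m))
  | step {m n : ℕ} {f : C m ≃ₜ C n} (i : Fin n) (hf : IsForest f) :
      IsForest (f.trans (splitAt i))

/-! The Grigorchuk generators `σ, b, c, d`, defined via the Grigorchuk automaton:
on binary sequences, `σ` flips the first letter, and `b(0w)=0σ(w)`, `b(1w)=1c(w)`,
`c(0w)=0σ(w)`, `c(1w)=1d(w)`, `d(0w)=0w`, `d(1w)=1b(w)`. -/

/-- States of the Grigorchuk automaton: the identity, `σ`, `b`, `c`, `d`. -/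
inductive GS : Type | e | s | b | c | d
deriving DecidableEq

instance : Fintype GS :=
  ⟨{.e, .s, .b, .c, .d}, by intro x; cases x <;> simp⟩

instance : TopologicalSpace GS := ⊥
instance : DiscreteTopology GS := ⟨rfl⟩

/-- Output function of the Grigorchuk automaton. -/
def GS.out : GS → Bool → Bool
  | .s, i => !i
  | _,  i => i

/-- Transition function of the Grigorchuk automaton. -/
def GS.step : GS → Bool → GS
  | .e, _ => .e
  | .s, _ => .e
  | .b, false => .s
  | .b, true  => .c
  | .c, false => .s
  | .c, true  => .d
  | .d, false => .e
  | .d, true  => .b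

/-- The state of the automaton started in state `g` after reading `w 0, …, w (n-1)`. -/
def GS.stArr (g : GS) (w : Δ) : ℕ → GS
  | 0 => g
  | n + 1 => (GS.stArr g w n).step (w n)

/-- The action of the automaton state `g` on infinite binary sequences. -/
def GS.act (g : GS) (w : Δ) : Δ := fun n => (GS.stArr g w n).out (w n)

lemma GS.out_out : ∀ (g : GS) (i : Bool), g.out (g.out i) = i := by decide

lemma GS.step_out : ∀ (g : GS) (i : Bool), g.step (g.out i) = g.step i := by decide

lemma GS.stArr_act (g : GS) (w : Δ) : ∀ n, GS.stArr g (GS.act g w) n = GS.stArr g w n := by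
  intro n
  induction n with
  | zero => rfl
  | succ n ih => rw [GS.stArr, GS.stArr, ih, GS.act, GS.step_out]

lemma GS.act_act (g : GS) (w : Δ) : GS.act g (GS.act g w) = w := by
  funext n
  rw [GS.act, GS.stArr_act, GS.act, GS.out_out]

lemma GS.continuous_stArr (g : GS) (n : ℕ) : Continuous (fun w : Δ => GS.stArr g w n) := by
  induction n with
  | zero => exact continuous_const
  | succ n ih =>
      exact Continuous.comp (f := fun w : Δ => ((GS.stArr g w n), w n))
        (g := fun p : GS × Bool => p.1.step p.2)
        continuous_of_discreteTopology (ih.prodMk (continuous_apply n))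

lemma GS.continuous_act (g : GS) : Continuous (GS.act g) := by
  refine continuous_pi fun n => ?_
  exact Continuous.comp (f := fun w : Δ => ((GS.stArr g w n), w n))
    (g := fun p : GS × Bool => p.1.out p.2)
    continuous_of_discreteTopology ((GS.continuous_stArr g n).prodMk (continuous_apply n))

/-- The homeomorphism of the Cantor set determined by an automaton state. -/
def GS.homeo (g : GS) : Δ ≃ₜ Δ where
  toFun := GS.act g
  invFun := GS.act g
  left_inv := GS.act_act g
  right_inv := GS.act_act g
  continuous_toFun := GS.continuous_act g
  continuous_invFun := GS.continuous_act g

/-- Lift a homeomorphism of the Cantor set to `C 1`. -/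
def liftC1 (h : Δ ≃ₜ Δ) : C 1 ≃ₜ C 1 := (Homeomorph.refl (Fin 1)).prodCongr h

/-- The Grigorchuk generator `σ` (flips the first letter). -/
def gσ : C 1 ≃ₜ C 1 := liftC1 (GS.homeo .s)
/-- The Grigorchuk generator `b`. -/
def gb : C 1 ≃ₜ C 1 := liftC1 (GS.homeo .b)
/-- The Grigorchuk generator `c`. -/
def gc : C 1 ≃ₜ C 1 := liftC1 (GS.homeo .c)
/-- The Grigorchuk generator `d`. -/
def gd : C 1 ≃ₜ C 1 := liftC1 (GS.homeo .d)

/-- The group of self-homeomorphisms of `C n`, with `(f * g) x = f (g x)`. -/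
instance homeoGroup (n : ℕ) : Group (C n ≃ₜ C n) where
  mul f g := g.trans f
  one := Homeomorph.refl _
  inv := Homeomorph.symm
  mul_assoc a b c := rfl
  one_mul a := rfl
  mul_one a := rfl
  inv_mul_cancel a := Homeomorph.self_trans_symm a

/-- The first Grigorchuk group `𝒢 = ⟨σ, b, c, d⟩`. -/
def Grig : Subgroup (C 1 ≃ₜ C 1) :=
  Subgroup.closure {gσ, gb, gc, gd}

/-- The set `K = {1, b, c, d}` of homeomorphisms of `C 1`. -/
def Kset : Set (C 1 ≃ₜ C 1) := {Homeomorph.refl (C 1), gb, gc, gd}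

/-- The `n`-fold direct sum `k₁ ⊕ ⋯ ⊕ k_n` of homeomorphisms of `C 1`. -/
def dsumFam : {n : ℕ} → (Fin n → (C 1 ≃ₜ C 1)) → (C n ≃ₜ C n)
  | 0, _ => Homeomorph.refl _
  | n + 1, k => dsum (dsumFam (fun i : Fin n => k i.castSucc)) (k (Fin.last n))

/-- The direct sum `h₁ ⊕ ⋯ ⊕ h_n` of a family of homeomorphisms
`h i : C 1 ≃ₜ C (m i)`. -/
def dsumFamH : {n : ℕ} → {m : Fin n → ℕ} → (∀ i, C 1 ≃ₜ C (m i)) →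
    (C n ≃ₜ C (∑ i, m i))
  | 0, _, _ => castC (by simp)
  | n + 1, m, h =>
      (dsum (dsumFamH (fun i : Fin n => h i.castSucc)) (h (Fin.last n))).trans
        (castC (Fin.sum_univ_castSucc m).symm)

/-- The group `K_n = {p_α ∘ (k₁ ⊕ ⋯ ⊕ k_n) : α ∈ S_n, kᵢ ∈ K}`. -/
def Kn (n : ℕ) : Set (C n ≃ₜ C n) :=
  {h | ∃ (α : Equiv.Perm (Fin n)) (k : Fin n → (C 1 ≃ₜ C 1)),
    (∀ i, k i ∈ Kset) ∧ h = (dsumFam k).trans (permC α)}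

/-- `σ_j : C m ≃ₜ C m`, acting as `σ` on the `(j+1)`-st copy (zero-indexed `j`)
of the Cantor set and as the identity elsewhere. -/
def sigmaAt {m : ℕ} (j : Fin m) : C m ≃ₜ C m :=
  dsumFam (fun i => if i = j then gσ else Homeomorph.refl (C 1))

/-- Membership in the groupoid `𝔙` generated by all split homeomorphisms and
all permutation homeomorphisms. -/
inductive InV : ∀ {m n : ℕ}, (C m ≃ₜ C n) → Prop where
  | split {n : ℕ} (i : Fin n) : InV (splitAt i)
  | perm {n : ℕ} (α : Equiv.Perm (Fin n)) : InV (permC α)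
  | comp {m n p : ℕ} {f : C m ≃ₜ C n} {g : C n ≃ₜ C p} :
      InV f → InV g → InV (f.trans g)
  | inv {m n : ℕ} {f : C m ≃ₜ C n} : InV f → InV f.symm

/-- Membership in Röver's groupoid `𝔙𝒢`, generated by `𝔙` together with the
elements of the Grigorchuk group `𝒢`. -/
inductive InVG : ∀ {m n : ℕ}, (C m ≃ₜ C n) → Prop where
  | split {n : ℕ} (i : Fin n) : InVG (splitAt i)
  | perm {n : ℕ} (α : Equiv.Perm (Fin n)) : InVG (permC α)
  | grig {g : C 1 ≃ₜ C 1} : g ∈ Grig → InVG g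
  | comp {m n p : ℕ} {f : C m ≃ₜ C n} {g : C n ≃ₜ C p} :
      InVG f → InVG g → InVG (f.trans g)
  | inv {m n : ℕ} {f : C m ≃ₜ C n} : InVG f → InVG f.symm

/-- The coset `[f] = K_n f = {k ∘ f : k ∈ K_n}` of `f : C 1 ≃ₜ C n`. -/
def coset {n : ℕ} (f : C 1 ≃ₜ C n) : Set (C 1 ≃ₜ C n) :=
  {h | ∃ k ∈ Kn n, h = f.trans k}

/-- The ambient type for vertices of the poset `𝒫`: a rank `n` together with
a set of homeomorphisms `C 1 ≃ₜ C n`. -/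
def PP : Type := Σ n : ℕ, Set (C 1 ≃ₜ C n)

/-- A member of `PP` is a vertex of `𝒫` if it is the coset `[f] = K_n f` of
some `f : C 1 ≃ₜ C n` in Röver's groupoid. -/
def IsVert (v : PP) : Prop :=
  ∃ f : C 1 ≃ₜ C v.1, InVG f ∧ v.2 = coset f

/-- `w` is a splitting of `v` if `v = [f]` and `w = [x_i ∘ f]` for some
representative `f` and some index `i`. -/
def SplittingOf (v w : PP) : Prop :=
  ∃ (n : ℕ) (f : C 1 ≃ₜ C n) (i : Fin n), InVG f ∧
    v = ⟨n, coset f⟩ ∧ w = ⟨n + 1, coset (f.trans (splitAt i))⟩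

/-- `w` is an expansion of `v` (written `v ≤ w`): `w` is obtained from `v` by
a finite (possibly empty) sequence of splittings. -/
def Expansion : PP → PP → Prop := Relation.ReflTransGen SplittingOf

/-- The four possible elementary pieces `1, x, σ₁ ∘ x, x₁ ∘ x` (with their
ranks), used to define elementary expansions. -/
def elemSet : Set (Σ m : ℕ, (C 1 ≃ₜ C m)) :=
  {⟨1, Homeomorph.refl (C 1)⟩, ⟨2, split⟩,
   ⟨2, split.trans (sigmaAt (0 : Fin 2))⟩,
   ⟨3, split.trans (splitAt (0 : Fin 2))⟩}

/-- `w` is an elementary expansion of `v`: `v = [f]` and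
`w = [(u₁ ⊕ ⋯ ⊕ u_n) ∘ f]` where each `uᵢ ∈ {1, x, σ₁∘x, x₁∘x}`. -/
def ElemExp (v w : PP) : Prop :=
  ∃ (n : ℕ) (f : C 1 ≃ₜ C n) (m : Fin n → ℕ) (h : ∀ i, C 1 ≃ₜ C (m i)),
    InVG f ∧ (∀ i, (⟨m i, h i⟩ : Σ m : ℕ, (C 1 ≃ₜ C m)) ∈ elemSet) ∧
    v = ⟨n, coset f⟩ ∧ w = ⟨∑ i, m i, coset (f.trans (dsumFamH h))⟩

/-!
Write `E_i = finSuccEquiv' i.castSucc : Fin (n + 1) ≃ Option (Fin n)`. After `x_i`, the copy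
`k ≠ i` sits at `E_i⁻¹ (some k)` and the two halves of copy `i` at `E_i⁻¹ none` and
`E_i⁻¹ (some i)`. Hence `x_{α j} ∘ p_α = p_β ∘ x_j` where `β = E_{α j}⁻¹ ∘ Option.map α ∘ E_j`,
and a permutation can be pushed through a forest one split at a time.
-/

section
variable {m m' n n' : ℕ}

lemma castC_apply (h : m = n) (p : C m) : castC h p = (Fin.cast h p.1, p.2) := rfl

lemma dsum_apply_castAdd (f : C m ≃ₜ C m') (g : C n ≃ₜ C n') (k : Fin m) (w : Δ) :
    dsum f g (k.castAdd n, w) = ((f (k, w)).1.castAdd n', (f (k, w)).2) := by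
  simp [dsum, toSum, discHomeo, Homeomorph.sumProdDistrib, Equiv.sumProdDistrib,
    Homeomorph.sumCongr, Prod.map]

lemma dsum_apply_natAdd (f : C m ≃ₜ C m') (g : C n ≃ₜ C n') (k : Fin n) (w : Δ) :
    dsum f g (k.natAdd m, w) = ((g (k, w)).1.natAdd m', (g (k, w)).2) := by
  simp [dsum, toSum, discHomeo, Homeomorph.sumProdDistrib, Equiv.sumProdDistrib,
    Homeomorph.sumCongr, Prod.map]

end

lemma split_apply (p : C 1) : split p = (finTwoEquiv.symm (p.2 0), fun t => p.2 (t + 1)) := rfl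

section
variable {n : ℕ}

lemma permC_apply (α : Equiv.Perm (Fin n)) (p : C n) : permC α p = (α p.1, p.2) := rfl

lemma splitAt_apply_of_lt {i k : Fin n} (h : k < i) (w : Δ) :
    splitAt i (k, w) = (k.castSucc, w) := by
  have hk : Fin.cast (by omega) k = ((⟨k, h⟩ : Fin i).castAdd 1).castAdd (n - 1 - i) := rfl
  simp only [splitAt, Homeomorph.trans_apply, castC_apply, hk, dsum_apply_castAdd]
  rfl

lemma splitAt_apply_self (i : Fin n) (w : Δ) :
    splitAt i (i, w) = (if w 0 then i.succ else i.castSucc, fun t => w (t + 1)) := by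
  have hi : Fin.cast (by omega) i = ((0 : Fin 1).natAdd i).castAdd (n - 1 - i) := rfl
  simp only [splitAt, Homeomorph.trans_apply, castC_apply, hi, dsum_apply_castAdd,
    dsum_apply_natAdd, split_apply]
  cases w 0 <;> rfl

lemma splitAt_apply_of_gt {i k : Fin n} (h : i < k) (w : Δ) :
    splitAt i (k, w) = (k.succ, w) := by
  have hk : Fin.cast (by omega) k = (⟨k - i - 1, by omega⟩ : Fin (n - 1 - i)).natAdd (i + 1) := by
    ext; simp only [Fin.val_cast, Fin.natAdd_mk]; omega
  simp only [splitAt, Homeomorph.trans_apply, castC_apply, hk, dsum_apply_natAdd]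
  ext
  · simp only [Homeomorph.refl_apply, id_eq, Fin.natAdd_mk, Fin.cast_mk, Fin.val_succ]; omega
  · rfl

lemma splitAt_apply (i k : Fin n) (w : Δ) :
    splitAt i (k, w) =
      ((finSuccEquiv' i.castSucc).symm (if k = i ∧ w 0 = false then none else some k),
        if k = i then fun t => w (t + 1) else w) := by
  rcases lt_trichotomy k i with h | rfl | h
  · simp [splitAt_apply_of_lt h, h.ne,
      Fin.succAbove_of_castSucc_lt _ _ (Fin.castSucc_lt_castSucc_iff.2 h)]
  · cases hw : w 0 <;> simp [splitAt_apply_self, hw, Fin.succAbove_of_le_castSucc]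
  · simp [splitAt_apply_of_gt h, h.ne',
      Fin.succAbove_of_le_castSucc _ _ (Fin.castSucc_le_castSucc_iff.2 h.le)]

def splitPerm (α : Equiv.Perm (Fin n)) (j : Fin n) : Equiv.Perm (Fin (n + 1)) :=
  (finSuccEquiv' j.castSucc).trans
    ((Equiv.optionCongr α).trans (finSuccEquiv' (α j).castSucc).symm)

lemma splitPerm_apply (α : Equiv.Perm (Fin n)) (j : Fin n) (o : Option (Fin n)) :
    splitPerm α j ((finSuccEquiv' j.castSucc).symm o) =
      (finSuccEquiv' (α j).castSucc).symm (o.map α) := by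
  simp [splitPerm]

lemma permC_trans_splitAt (α : Equiv.Perm (Fin n)) (j : Fin n) :
    (permC α).trans (splitAt (α j)) = (splitAt j).trans (permC (splitPerm α j)) := by
  ext ⟨k, w⟩ : 1
  simp only [Homeomorph.trans_apply, permC_apply, splitAt_apply, α.apply_eq_iff_eq,
    splitPerm_apply]
  by_cases hk : k = j <;> simp [hk, apply_ite]

end

theorem perm_forest_exchange {m n : ℕ} (α : Equiv.Perm (Fin m)) (f : C m ≃ₜ C n)
    (hf : IsForest f) :
    ∃ (f' : C m ≃ₜ C n) (α' : Equiv.Perm (Fin n)),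
      IsForest f' ∧ (permC α).trans f = f'.trans (permC α') := by
  induction hf generalizing α with
  | refl => exact ⟨Homeomorph.refl _, α, IsForest.refl _, rfl⟩
  | @step _ g i _ ih =>
    obtain ⟨f', α', hf', hcomm⟩ := ih α
    refine ⟨f'.trans (splitAt (α'.symm i)), splitPerm α' (α'.symm i), hf'.step _, ?_⟩
    calc (permC α).trans (g.trans (splitAt i))
        = ((permC α).trans g).trans (splitAt i) := rfl
      _ = f'.trans ((permC α').trans (splitAt (α' (α'.symm i)))) := by
          rw [hcomm, α'.apply_symm_apply]; rfl
      _ = (f'.trans (splitAt (α'.symm i))).trans (permC (splitPerm α' (α'.symm i))) := by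
          rw [permC_trans_splitAt]; rfl
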